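/- arXiv:2410.16453 — 2 statements merged into one kernel-verified Lean document; each statement's English description precedes it below -/
import Mathlib

section
/- For nonnegative matrices V, V' ∈ ℝ^{n×k} with V' entrywise positive, a diagonal matrix D with positive entries, and a symmetric entrywise-nonnegative k × k matrix Ω⁺, one has tr(Ω⁺ Vᵀ D V) ≤ ∑_{ij} (D V' Ω⁺)_{ij} V_{ij}² / V'_{ij}. -/
/-!
Both sides split over the rows: with `v` the `i`-th row of `V` and `p` the `i`-th row of `V'`,
the `i`-th summand of the trace is `dᵢ · vᵀ Ω v`. Bounding each product `v_a v_b` by AM-GM,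
`v_a v_b ≤ (p_b v_a² / p_a + p_a v_b² / p_b) / 2`, and weighting with `Ω_ab ≥ 0` gives two sums
that the symmetry of `Ω` identifies with `∑_a (pᵀ Ω)_a v_a² / p_a`.
-/

open Matrix

section OrderedField

variable {K : Type*} [Field K] [LinearOrder K] [IsStrictOrderedRing K]

theorem mul_le_add_mul_sq_div_two {p q : K} (hp : 0 < p) (hq : 0 < q) (x y : K) :
    x * y ≤ (q * x ^ 2 / p + p * y ^ 2 / q) / 2 := by
  have hgap : (q * x ^ 2 / p + p * y ^ 2 / q) / 2 - x * y = (q * x - p * y) ^ 2 / (2 * p * q) := by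
    field_simp
    ring
  have : 0 ≤ (q * x - p * y) ^ 2 / (2 * p * q) := by positivity
  linarith

variable {ι : Type*} [Fintype ι]

theorem dotProduct_mulVec_le_sum_vecMul_mul_sq_div {Ω : Matrix ι ι K} (hΩ : Ω.IsSymm)
    (hΩ_nonneg : ∀ a b, 0 ≤ Ω a b) {p : ι → K} (hp : ∀ a, 0 < p a) (x : ι → K) :
    x ⬝ᵥ Ω *ᵥ x ≤ ∑ a, (p ᵥ* Ω) a * x a ^ 2 / p a := by
  set T := ∑ a, (p ᵥ* Ω) a * x a ^ 2 / p a
  have hT : ∑ a, ∑ b, Ω a b * (p a * x b ^ 2 / p b) = T := by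
    simp only [T, vecMul, dotProduct, Finset.sum_mul, Finset.sum_div]
    rw [Finset.sum_comm]
    exact Finset.sum_congr rfl fun b _ => Finset.sum_congr rfl fun a _ => by ring
  have hT' : ∑ a, ∑ b, Ω a b * (p b * x a ^ 2 / p a) = T := by
    rw [← hT, Finset.sum_comm]
    exact Finset.sum_congr rfl fun a _ => Finset.sum_congr rfl fun b _ => by rw [hΩ.apply]
  calc x ⬝ᵥ Ω *ᵥ x = ∑ a, ∑ b, Ω a b * (x a * x b) := by
        simp only [dotProduct, mulVec, Finset.mul_sum]
        exact Finset.sum_congr rfl fun a _ => Finset.sum_congr rfl fun b _ => by ring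
    _ ≤ ∑ a, ∑ b, Ω a b * ((p b * x a ^ 2 / p a + p a * x b ^ 2 / p b) / 2) :=
        Finset.sum_le_sum fun a _ => Finset.sum_le_sum fun b _ =>
          mul_le_mul_of_nonneg_left (mul_le_add_mul_sq_div_two (hp a) (hp b) _ _) (hΩ_nonneg a b)
    _ = (∑ a, ∑ b, Ω a b * (p b * x a ^ 2 / p a) + ∑ a, ∑ b, Ω a b * (p a * x b ^ 2 / p b)) / 2 := by
        simp only [mul_div, mul_add, add_div, Finset.sum_add_distrib, Finset.sum_div]
    _ = T := by rw [hT, hT']; ring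

end OrderedField

theorem Matrix.trace_mul_transpose_mul_diagonal_mul {R ι m : Type*} [CommSemiring R] [Fintype ι]
    [Fintype m] [DecidableEq m] (Ω : Matrix ι ι R) (V : Matrix m ι R) (d : m → R) :
    (Ω * Vᵀ * diagonal d * V).trace = ∑ i, d i * (V i ⬝ᵥ Ω *ᵥ V i) := by
  rw [trace_mul_comm, ← Matrix.mul_assoc]
  simp only [trace, diag, mul_diagonal]
  simp only [mul_apply, transpose_apply, dotProduct, mulVec, Finset.sum_mul, Finset.mul_sum]
  exact Finset.sum_congr rfl fun i _ => Finset.sum_congr rfl fun a _ =>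
    Finset.sum_congr rfl fun b _ => by ring

theorem stmt_13_general (n k : ℕ)
    (V V' : Matrix (Fin n) (Fin k) ℝ)
    (hV' : ∀ i j, 0 < V' i j)
    (D : Matrix (Fin n) (Fin n) ℝ) (dD : Fin n → ℝ)
    (hD : D = Matrix.diagonal dD) (hdD : ∀ i, 0 < dD i)
    (Ωp : Matrix (Fin k) (Fin k) ℝ)
    (hΩsymm : Ωp.IsSymm) (hΩnonneg : ∀ i j, 0 ≤ Ωp i j) :
    (Ωp * Vᵀ * D * V).trace ≤
      ∑ i, ∑ j, (D * V' * Ωp) i j * (V i j)^2 / V' i j := by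
  subst hD
  rw [trace_mul_transpose_mul_diagonal_mul]
  refine Finset.sum_le_sum fun i _ => ?_
  rw [Matrix.mul_assoc]
  simp only [diagonal_mul, mul_apply_eq_vecMul]
  have hrow := mul_le_mul_of_nonneg_left
    (dotProduct_mulVec_le_sum_vecMul_mul_sq_div hΩsymm hΩnonneg (hV' i) (V i)) (hdD i).le
  simpa only [Finset.mul_sum, mul_assoc, mul_div_assoc] using hrow

theorem stmt_13 (n k : ℕ)
    (V V' : Matrix (Fin n) (Fin k) ℝ)
    (hV : ∀ i j, 0 ≤ V i j) (hV' : ∀ i j, 0 < V' i j)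
    (D : Matrix (Fin n) (Fin n) ℝ) (dD : Fin n → ℝ)
    (hD : D = Matrix.diagonal dD) (hdD : ∀ i, 0 < dD i)
    (Ωp : Matrix (Fin k) (Fin k) ℝ)
    (hΩsymm : Ωp.IsSymm) (hΩnonneg : ∀ i j, 0 ≤ Ωp i j) :
    (Ωp * Vᵀ * D * V).trace ≤
      ∑ i, ∑ j, (D * V' * Ωp) i j * (V i j)^2 / V' i j :=
  stmt_13_general n k V V' hV' D dD hD hdD Ωp hΩsymm hΩnonneg
end

section
/- For entrywise positive matrices V, V' ∈ ℝ^{n×k}, a diagonal D with positive entries, and an entrywise-nonnegative k × k matrix Ω⁻, one has tr(Ω⁻ Vᵀ D V) ≥ ∑_{i,j,l} D_{ii} V'_{il} Ω⁻_{lj} V'_{ij} (1 + log(V_{il} V_{ij} / (V'_{il} V'_{ij}))). -/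
open Matrix

lemma aux_term (d w a b : ℝ) (hd : 0 ≤ d) (hw : 0 ≤ w) (ha : 0 < a) (hb : 0 < b) :
    d * w * b * (1 + Real.log (a / b)) ≤ d * w * a := by
  have h : 1 + Real.log (a / b) ≤ a / b := by
    have := Real.log_le_sub_one_of_pos (div_pos ha hb)
    linarith
  calc d * w * b * (1 + Real.log (a / b)) ≤ d * w * b * (a / b) :=
        mul_le_mul_of_nonneg_left h (by positivity)
    _ = d * w * a := by
        field_simp

theorem stmt_14 (n k : ℕ)
    (V V' : Matrix (Fin n) (Fin k) ℝ)
    (hV : ∀ i j, 0 < V i j) (hV' : ∀ i j, 0 < V' i j)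
    (D : Matrix (Fin n) (Fin n) ℝ) (dD : Fin n → ℝ)
    (hD : D = Matrix.diagonal dD) (hdD : ∀ i, 0 < dD i)
    (Ωm : Matrix (Fin k) (Fin k) ℝ) (hΩnonneg : ∀ i j, 0 ≤ Ωm i j) :
    (∑ i, ∑ j, ∑ l, D i i * V' i l * Ωm l j * V' i j *
        (1 + Real.log (V i l * V i j / (V' i l * V' i j)))) ≤
      (Ωm * Vᵀ * D * V).trace := by
  subst hD
  have hR : (Ωm * Vᵀ * Matrix.diagonal dD * V).trace
      = ∑ i, ∑ j, ∑ l, dD i * Ωm l j * (V i l * V i j) := by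
    rw [Matrix.trace_mul_comm, ← Matrix.mul_assoc, ← Matrix.mul_assoc]
    simp only [Matrix.trace, Matrix.diag, Matrix.mul_diagonal]
    simp only [Matrix.mul_apply, Matrix.transpose_apply, Finset.sum_mul, Finset.mul_sum]
    refine Finset.sum_congr rfl fun i _ => Finset.sum_congr rfl fun j _ =>
      Finset.sum_congr rfl fun l _ => by ring
  rw [hR]
  refine Finset.sum_le_sum fun i _ => Finset.sum_le_sum fun j _ =>
    Finset.sum_le_sum fun l _ => ?_
  have h := aux_term (dD i) (Ωm l j) (V i l * V i j) (V' i l * V' i j)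
    (le_of_lt (hdD i)) (hΩnonneg l j)
    (mul_pos (hV i l) (hV i j)) (mul_pos (hV' i l) (hV' i j))
  calc Matrix.diagonal dD i i * V' i l * Ωm l j * V' i j *
        (1 + Real.log (V i l * V i j / (V' i l * V' i j)))
      = dD i * Ωm l j * (V' i l * V' i j) *
        (1 + Real.log (V i l * V i j / (V' i l * V' i j))) := by
        rw [Matrix.diagonal_apply_eq]; ring
    _ ≤ dD i * Ωm l j * (V i l * V i j) := h
end
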